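/- Suppose V = V₁ ⊕ V₂ is an orthogonal direct sum of two 2-dimensional subspaces (H(V₁,V₂) = 0), and let V₁∧V₂ ⊆ ⋀²V denote the image of V₁ ⊗ V₂ under v⊗w ↦ v∧w, so that ⋀²V = ⋀²V₁ ⊕ ⋀²V₂ ⊕ (V₁∧V₂). Then: (i) L(V₁∧V₂) ⊆ V₁∧V₂ and L(⋀²V₁ ⊕ ⋀²V₂) ⊆ ⋀²V₁ ⊕ ⋀²V₂; (ii) if g = g₁ ⊕ g₂ with g_i ∈ GU(V_i, H|_{V_i}) and ν(g₁) = ν(g₂), then ⋀²g acts on ⋀²V_i as multiplication by the scalar det(g_i) and maps V₁∧V₂ to itself by v∧w ↦ g₁(v)∧g₂(w). -/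

import Mathlib

/-- The canonical generator `v₁ ∧ ⋯ ∧ vₙ` of the `n`-th exterior power, as an element of the
submodule `⋀[E]^n V` of the exterior algebra. -/
noncomputable def wedgeι (E : Type*) [CommRing E] {V : Type*} [AddCommGroup V] [Module E V]
    (n : ℕ) (v : Fin n → V) : ⋀[E]^n V :=
  ⟨ExteriorAlgebra.ιMulti E n v, ExteriorAlgebra.ιMulti_range E n (Set.mem_range_self v)⟩

/-- The wedge (exterior) product `⋀²V × ⋀²V → ⋀⁴V`. -/
noncomputable def wedgeMul (E : Type*) [CommRing E] {V : Type*} [AddCommGroup V] [Module E V]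
    (x y : ⋀[E]^2 V) : ⋀[E]^4 V :=
  ⟨(x : ExteriorAlgebra E V) * (y : ExteriorAlgebra E V), by
    have h := Submodule.mul_mem_mul x.2 y.2
    have e : (⋀[E]^2 V) * (⋀[E]^2 V) = ⋀[E]^4 V := by
      show LinearMap.range (ExteriorAlgebra.ι E (M := V)) ^ 2 *
          LinearMap.range (ExteriorAlgebra.ι E (M := V)) ^ 2
        = LinearMap.range (ExteriorAlgebra.ι E (M := V)) ^ 4
      rw [← pow_add]
    exact e ▸ h⟩

/-- `h` is a form on `⋀^r V`, additive in each variable, `ρ`-sesquilinear, conjugate-symmetric,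
whose value on decomposable wedges is the determinant `det (H (v i) (w j))`. -/
def IsDetForm {E : Type*} [Field E] (ρ : E →+* E)
    {V : Type*} [AddCommGroup V] [Module E V] (H : V → V → E) (r : ℕ)
    (h : (⋀[E]^r V) → (⋀[E]^r V) → E) : Prop :=
  (∀ x y z, h (x + y) z = h x z + h y z) ∧
  (∀ x y z, h x (y + z) = h x y + h x z) ∧
  (∀ (a b : E) (x y : ⋀[E]^r V), h (a • x) (b • y) = ρ a * h x y * b) ∧
  (∀ x y, h x y = ρ (h y x)) ∧
  (∀ v w : Fin r → V,
    h (wedgeι E r v) (wedgeι E r w) = (Matrix.of fun i j => H (v i) (w j)).det)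


/-- The submodule of `⋀²V` spanned by wedges `v ∧ w` with `v ∈ W₁`, `w ∈ W₂`. -/
noncomputable def wedgeSpan (E : Type*) [Field E] {V : Type*} [AddCommGroup V] [Module E V]
    (W₁ W₂ : Submodule E V) : Submodule E ↥(⋀[E]^2 V) :=
  Submodule.span E {z | ∃ v ∈ W₁, ∃ w ∈ W₂, z = wedgeι E 2 ![v, w]}


/-!
Write `x ∧ y` for the product `⋀²V × ⋀²V → ⋀⁴V`, so that `d (L x ∧ y) = h₂ x y`.
Put `P = V₁ ∧ V₂` and `Q = ⋀²V₁ + ⋀²V₂`; then `⋀²V = P + Q`, and `P`, `Q` are each other's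
annihilators for the wedge pairing. Indeed `P ∧ Q = 0`, since a wedge of four vectors three of
which lie in a plane vanishes, while `⋀²Vᵢ` is the line through the wedge of a basis of `Vᵢ`, and
four vectors made of a basis of `V₁` and a basis of `V₂` are linearly independent, so their wedge is
nonzero. Orthogonality of `V₁` and `V₂` makes `h₂` vanish on `P × Q` and on `Q × P` (a `2 × 2`
determinant with a zero row or column), hence `L P` lies in the annihilator of `Q`, which is `P`,
and `L Q` in the annihilator of `P`, which is `Q`. Finally `⋀²Vᵢ` is the top exterior power of
`Vᵢ`, on which `⋀²g` acts by `det (g|Vᵢ)`.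
-/

open ExteriorAlgebra Submodule

section Alternating

variable {K M N ι : Type*} [Field K] [AddCommGroup M] [Module K M] [AddCommGroup N] [Module K N]
  [Fintype ι] [DecidableEq ι]

theorem AlternatingMap.apply_eq_det_smul (b : Module.Basis ι K M) (f : M [⋀^ι]→ₗ[K] N)
    (v : ι → M) : f v = b.det v • f b := by
  refine sub_eq_zero.1 <| (Module.forall_dual_apply_eq_zero_iff K (f v - b.det v • f b)).1
    fun φ => ?_
  have h := (φ.compAlternatingMap f).eq_smul_basis_det b
  rw [map_sub, map_smul, sub_eq_zero]
  simpa [mul_comm] using congrArg (· v) h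

theorem AlternatingMap.apply_comp_eq_det_smul (b : Module.Basis ι K M) (f : M [⋀^ι]→ₗ[K] N)
    (g : M →ₗ[K] M) (v : ι → M) : f (g ∘ v) = LinearMap.det g • f v := by
  rw [f.apply_eq_det_smul b (g ∘ v), f.apply_eq_det_smul b v, b.det_comp, mul_smul]

end Alternating

section LinearIndependent

variable {K M : Type*} [Field K] [AddCommGroup M] [Module K M]

theorem exteriorPower.ιMulti_ne_zero_of_linearIndependent {n : ℕ} {v : Fin n → M}
    (hv : LinearIndependent K v) : exteriorPower.ιMulti K n v ≠ 0 := by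
  -- `⋀ⁿ` of the inclusion of `span v` is injective, and the determinant of the basis `v` of
  -- `span v` is nonzero on `ιMulti v`.
  let b := Module.Basis.span hv
  have hb : (span K (Set.range v)).subtype ∘ b = v := funext fun i => by simp [b]
  have hmap := exteriorPower.map_apply_ιMulti (n := n) (span K (Set.range v)).subtype b
  rw [hb] at hmap
  rw [← hmap, ne_eq, map_eq_zero_iff _ (exteriorPower.map_injective_field
    (span K (Set.range v)).injective_subtype)]
  intro h
  have := congrArg (exteriorPower.alternatingMapLinearEquiv b.det) h
  rw [exteriorPower.alternatingMapLinearEquiv_apply_ιMulti, b.det_self, map_zero] at this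
  exact one_ne_zero this

theorem LinearIndependent.fin_append {m n : ℕ} {a : Fin m → M} {c : Fin n → M}
    (ha : LinearIndependent K a) (hc : LinearIndependent K c)
    (h : Disjoint (span K (Set.range a)) (span K (Set.range c))) :
    LinearIndependent K (Fin.append a c) := by
  rw [← linearIndependent_equiv finSumFinEquiv]
  exact Fin.append_comp_sumElim ▸ ha.sum_type hc h

theorem LinearIndependent.coe_pair {W : Submodule K M} {v : Fin 2 → W}
    (hv : LinearIndependent K v) : LinearIndependent K ![(v 0 : M), v 1] := by
  have h := hv.map' W.subtype (ker_subtype W)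
  rwa [show W.subtype ∘ v = ![(v 0 : M), v 1] by ext i; fin_cases i <;> rfl] at h

theorem span_singleton_sup_span_singleton_eq_of_basis {W : Submodule K M}
    (b : Module.Basis (Fin 2) K W) : span K {(b 0 : M)} ⊔ span K {(b 1 : M)} = W := by
  have h : span K (Set.range (W.subtype ∘ b)) = W := by
    rw [Set.range_comp, span_image, b.span_eq, map_subtype_top]
  rw [← span_insert]
  convert h using 2
  ext x
  simp [Fin.exists_fin_two, eq_comm]

end LinearIndependent

section Wedge

variable {E V : Type*} [Field E] [AddCommGroup V] [Module E V]

theorem wedgeι_eq_ιMulti (n : ℕ) (v : Fin n → V) :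
    wedgeι E n v = exteriorPower.ιMulti E n v := rfl

theorem coe_wedgeι_two (v w : V) :
    (wedgeι E 2 ![v, w] : ExteriorAlgebra E V) = ι E v * ι E w := by
  simp [wedgeι, ιMulti_apply]

theorem coe_wedgeι_four (a b c d : V) :
    (wedgeι E 4 ![a, b, c, d] : ExteriorAlgebra E V) = ι E a * (ι E b * (ι E c * ι E d)) := by
  simp [wedgeι, ιMulti_apply, Matrix.vecTail]

theorem wedgeι_two_swap (v w : V) : wedgeι E 2 ![w, v] = -wedgeι E 2 ![v, w] :=
  Subtype.ext <| by
    simp only [coe_wedgeι_two, Submodule.coe_neg]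
    exact eq_neg_of_add_eq_zero_left (ι_add_mul_swap w v)

theorem wedgeι_four_swap (a b c d : V) :
    wedgeι E 4 ![a, c, b, d] = -wedgeι E 4 ![a, b, c, d] := by
  have h := (exteriorPower.ιMulti E 4).map_swap ![a, b, c, d] (i := 1) (j := 2) (by decide)
  rwa [show ![a, b, c, d] ∘ Equiv.swap 1 2 = ![a, c, b, d] by ext i; fin_cases i <;> rfl] at h

theorem wedgeMul_wedgeι_two (a b c d : V) :
    wedgeMul E (wedgeι E 2 ![a, b]) (wedgeι E 2 ![c, d]) = wedgeι E 4 ![a, b, c, d] :=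
  Subtype.ext <| by simp [wedgeMul, coe_wedgeι_two, coe_wedgeι_four, mul_assoc]

variable (E) in
noncomputable def wedgePair : V →ₗ[E] V →ₗ[E] ⋀[E]^2 V :=
  LinearMap.mk₂ E (fun v w => wedgeι E 2 ![v, w])
    (fun _ _ _ => Subtype.ext <| by simp [coe_wedgeι_two, add_mul])
    (fun _ _ _ => Subtype.ext <| by simp [coe_wedgeι_two])
    (fun _ _ _ => Subtype.ext <| by simp [coe_wedgeι_two, mul_add])
    (fun _ _ _ => Subtype.ext <| by simp [coe_wedgeι_two])

theorem wedgePair_apply (v w : V) : wedgePair E v w = wedgeι E 2 ![v, w] := rfl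

variable (E) in
noncomputable def wedgeMulₗ : ⋀[E]^2 V →ₗ[E] ⋀[E]^2 V →ₗ[E] ⋀[E]^4 V :=
  LinearMap.mk₂ E (wedgeMul E)
    (fun _ _ _ => Subtype.ext <| by simp [wedgeMul, add_mul])
    (fun _ _ _ => Subtype.ext <| by simp [wedgeMul])
    (fun _ _ _ => Subtype.ext <| by simp [wedgeMul, mul_add])
    (fun _ _ _ => Subtype.ext <| by simp [wedgeMul])

theorem wedgeMul_add_left (x x' y : ⋀[E]^2 V) :
    wedgeMul E (x + x') y = wedgeMul E x y + wedgeMul E x' y :=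
  LinearMap.map_add₂ (wedgeMulₗ E) x x' y

theorem wedgeMul_smul_left (c : E) (x y : ⋀[E]^2 V) :
    wedgeMul E (c • x) y = c • wedgeMul E x y :=
  LinearMap.map_smul₂ (wedgeMulₗ E) c x y

theorem wedgeSpan_eq_map₂ (W₁ W₂ : Submodule E V) :
    wedgeSpan E W₁ W₂ = map₂ (wedgePair E) W₁ W₂ := by
  rw [map₂_eq_span_image2, wedgeSpan]
  congr 1
  ext z
  simp [Set.mem_image2, wedgePair_apply, eq_comm]

theorem wedgeSpan_le_wedgeSpan_swap (W₁ W₂ : Submodule E V) :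
    wedgeSpan E W₁ W₂ ≤ wedgeSpan E W₂ W₁ := by
  rw [wedgeSpan_eq_map₂, wedgeSpan_eq_map₂]
  refine map₂_le.2 fun v hv w hw => ?_
  rw [wedgePair_apply, ← neg_neg (wedgeι E 2 ![v, w]), ← wedgeι_two_swap]
  exact neg_mem (apply_mem_map₂ _ hw hv)

theorem wedgeSpan_comm (W₁ W₂ : Submodule E V) : wedgeSpan E W₁ W₂ = wedgeSpan E W₂ W₁ :=
  le_antisymm (wedgeSpan_le_wedgeSpan_swap W₁ W₂) (wedgeSpan_le_wedgeSpan_swap W₂ W₁)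

theorem wedgeSpan_top_top : wedgeSpan E (⊤ : Submodule E V) ⊤ = ⊤ := by
  rw [eq_top_iff, ← exteriorPower.ιMulti_span, span_le]
  rintro _ ⟨v, rfl⟩
  rw [show v = ![v 0, v 1] by ext i; fin_cases i <;> rfl]
  exact subset_span ⟨v 0, mem_top, v 1, mem_top, rfl⟩

theorem wedgeSpan_sup_eq_top {V₁ V₂ : Submodule E V} (h : V₁ ⊔ V₂ = ⊤) :
    wedgeSpan E V₁ V₂ ⊔ (wedgeSpan E V₁ V₁ ⊔ wedgeSpan E V₂ V₂) = ⊤ := by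
  rw [eq_top_iff, ← wedgeSpan_top_top, ← h, wedgeSpan_eq_map₂, map₂_sup_left, map₂_sup_right,
    map₂_sup_right, ← wedgeSpan_eq_map₂, ← wedgeSpan_eq_map₂, ← wedgeSpan_eq_map₂,
    ← wedgeSpan_eq_map₂, wedgeSpan_comm V₂ V₁]
  exact sup_le (sup_le (le_sup_of_le_right le_sup_left) le_sup_left)
    (sup_le le_sup_left (le_sup_of_le_right le_sup_right))

theorem exists_eq_wedgePair_add_wedgePair {W₁ W₂ : Submodule E V}
    (b : Module.Basis (Fin 2) E W₁) {p : ⋀[E]^2 V} (hp : p ∈ wedgeSpan E W₁ W₂) :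
    ∃ w₀ ∈ W₂, ∃ w₁ ∈ W₂, p = wedgePair E (b 0 : V) w₀ + wedgePair E (b 1 : V) w₁ := by
  rw [wedgeSpan_eq_map₂, ← span_singleton_sup_span_singleton_eq_of_basis b, map₂_sup_left,
    map₂_span_singleton_eq_map, map₂_span_singleton_eq_map] at hp
  obtain ⟨_, ⟨w₀, hw₀, rfl⟩, _, ⟨w₁, hw₁, rfl⟩, rfl⟩ := mem_sup.1 hp
  exact ⟨w₀, hw₀, w₁, hw₁, rfl⟩

theorem exteriorPower.map_wedgeι_two (g : V →ₗ[E] V) (x y : V) :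
    exteriorPower.map 2 g (wedgeι E 2 ![x, y]) = wedgeι E 2 ![g x, g y] := by
  rw [wedgeι_eq_ιMulti, exteriorPower.map_apply_ιMulti, ← FinVec.map_eq]
  rfl

theorem wedgeMul_eq_zero_of_mem_wedgeSpan {A B : Submodule E V} {x y : ⋀[E]^2 V}
    (h : ∀ a ∈ A, ∀ b ∈ B, wedgeMul E (wedgeι E 2 ![a, b]) y = 0) (hx : x ∈ wedgeSpan E A B) :
    wedgeMul E x y = 0 :=
  (span_le (p := LinearMap.ker ((wedgeMulₗ E).flip y))).2
    (by rintro _ ⟨a, ha, b, hb, rfl⟩; exact h a ha b hb) hx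

theorem wedgeι_eq_zero_of_finrank_lt {n k : ℕ} (v : Fin n → V) (W : Submodule E V)
    [FiniteDimensional E W] (hk : Module.finrank E W < k) (s : Fin k → Fin n)
    (hs : Function.Injective s) (hv : ∀ i, v (s i) ∈ W) : wedgeι E n v = 0 := by
  refine (exteriorPower.ιMulti E n).map_linearDependent v fun hli => hk.not_ge ?_
  have hW : LinearIndependent E fun i => (⟨v (s i), hv i⟩ : W) :=
    .of_comp W.subtype (hli.comp s hs)
  simpa using hW.fintype_card_le_finrank

theorem wedgeι_four_ne_zero {V₁ V₂ : Submodule E V} (hdisj : Disjoint V₁ V₂) {a a' w u : V}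
    (ha : a ∈ V₁) (ha' : a' ∈ V₁) (hw : w ∈ V₂) (hu : u ∈ V₂)
    (h₁ : LinearIndependent E ![a, a']) (h₂ : LinearIndependent E ![w, u]) :
    wedgeι E 4 ![a, a', w, u] ≠ 0 := by
  have hspan₁ : span E (Set.range ![a, a']) ≤ V₁ :=
    span_le.2 <| Set.range_subset_iff.2 fun i => by fin_cases i <;> assumption
  have hspan₂ : span E (Set.range ![w, u]) ≤ V₂ :=
    span_le.2 <| Set.range_subset_iff.2 fun i => by fin_cases i <;> assumption
  have hli := h₁.fin_append h₂ (hdisj.mono hspan₁ hspan₂)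
  rw [show Fin.append ![a, a'] ![w, u] = ![a, a', w, u] by ext i; fin_cases i <;> rfl] at hli
  exact exteriorPower.ιMulti_ne_zero_of_linearIndependent hli

theorem eq_zero_of_forall_wedgeι_eq_zero {V₁ V₂ : Submodule E V} (hdisj : Disjoint V₁ V₂)
    (hV₂ : Module.finrank E V₂ = 2) {a a' w : V} (ha : a ∈ V₁) (ha' : a' ∈ V₁)
    (hli : LinearIndependent E ![a, a']) (hw : w ∈ V₂)
    (h : ∀ u ∈ V₂, wedgeι E 4 ![a, w, a', u] = 0) : w = 0 := by
  by_contra hne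
  obtain ⟨u, hu⟩ := exists_linearIndependent_pair_of_one_lt_finrank (hV₂ ▸ one_lt_two)
    (x := (⟨w, hw⟩ : V₂)) (by simpa using hne)
  refine wedgeι_four_ne_zero hdisj ha ha' hw u.2 hli hu.coe_pair ?_
  rw [← neg_eq_zero, ← wedgeι_four_swap]
  exact h u u.2

theorem wedgeι_two_eq_det_smul {W : Submodule E V} (b : Module.Basis (Fin 2) E W) (v w : W) :
    wedgeι E 2 ![(v : V), w] = b.det ![v, w] • wedgeι E 2 ![(b 0 : V), b 1] := by
  have h := ((exteriorPower.ιMulti E 2).compLinearMap W.subtype).apply_eq_det_smul b ![v, w]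
  have hvw : (fun i => W.subtype (![v, w] i)) = ![(v : V), w] := by ext i; fin_cases i <;> rfl
  have hb : (fun i => W.subtype (b i)) = ![(b 0 : V), b 1] := by ext i; fin_cases i <;> rfl
  rwa [AlternatingMap.compLinearMap_apply, AlternatingMap.compLinearMap_apply, hb, hvw] at h

theorem wedgeSpan_self_le_span_singleton {W : Submodule E V} (b : Module.Basis (Fin 2) E W) :
    wedgeSpan E W W ≤ span E {wedgeι E 2 ![(b 0 : V), b 1]} := by
  refine span_le.2 ?_
  rintro _ ⟨v, hv, w, hw, rfl⟩
  rw [SetLike.mem_coe, wedgeι_two_eq_det_smul b ⟨v, hv⟩ ⟨w, hw⟩]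
  exact smul_mem _ _ (mem_span_singleton_self _)

theorem exteriorPower.map_eq_det_smul_of_mem_wedgeSpan {W : Submodule E V}
    [FiniteDimensional E W] (hW : Module.finrank E W = 2) (g : V →ₗ[E] V)
    (hg : ∀ x ∈ W, g x ∈ W) {z : ⋀[E]^2 V} (hz : z ∈ wedgeSpan E W W) :
    exteriorPower.map 2 g z = LinearMap.det (g.restrict hg) • z := by
  let b := Module.finBasisOfFinrankEq E W hW
  refine LinearMap.eqOn_span' (g := LinearMap.det (g.restrict hg) • LinearMap.id) ?_ hz
  rintro _ ⟨v, hv, w, hw, rfl⟩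
  have h := ((exteriorPower.ιMulti E 2).compLinearMap W.subtype).apply_comp_eq_det_smul b
    (g.restrict hg) ![⟨v, hv⟩, ⟨w, hw⟩]
  have hgvw : (fun i => W.subtype ((g.restrict hg ∘ ![⟨v, hv⟩, ⟨w, hw⟩]) i)) = g ∘ ![v, w] := by
    ext i; fin_cases i <;> rfl
  have hvw : (fun i => W.subtype (![⟨v, hv⟩, ⟨w, hw⟩] i)) = ![v, w] := by
    ext i; fin_cases i <;> rfl
  rw [AlternatingMap.compLinearMap_apply, AlternatingMap.compLinearMap_apply, hgvw, hvw] at h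
  rw [wedgeι_eq_ιMulti, exteriorPower.map_apply_ιMulti, h]
  rfl

end Wedge

section Decomposition

variable {E V : Type*} [Field E] [AddCommGroup V] [Module E V] [FiniteDimensional E V]
  {V₁ V₂ : Submodule E V}

theorem wedgeMul_eq_zero_of_mem_wedgeSpan_of_mem {W₁ W₂ : Submodule E V}
    (hW₂ : Module.finrank E W₂ = 2) {p : ⋀[E]^2 V} (hp : p ∈ wedgeSpan E W₁ W₂) {v w : V}
    (hv : v ∈ W₂) (hw : w ∈ W₂) : wedgeMul E p (wedgeι E 2 ![v, w]) = 0 := by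
  refine wedgeMul_eq_zero_of_mem_wedgeSpan (fun a _ b hb => ?_) hp
  rw [wedgeMul_wedgeι_two]
  exact wedgeι_eq_zero_of_finrank_lt _ W₂ (by omega) ![1, 2, 3] (by decide)
    fun i => by fin_cases i <;> simp [hb, hv, hw]

theorem wedgeMul_eq_zero_of_mem_wedgeSpan_self {W : Submodule E V}
    (hW : Module.finrank E W = 2) {q : ⋀[E]^2 V} (hq : q ∈ wedgeSpan E W W) {v w : V}
    (hvw : v ∈ W ∨ w ∈ W) : wedgeMul E q (wedgeι E 2 ![v, w]) = 0 := by
  refine wedgeMul_eq_zero_of_mem_wedgeSpan (fun a ha b hb => ?_) hq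
  rw [wedgeMul_wedgeι_two]
  rcases hvw with hv | hw
  · exact wedgeι_eq_zero_of_finrank_lt _ W (by omega) ![0, 1, 2] (by decide)
      fun i => by fin_cases i <;> simp [ha, hb, hv]
  · exact wedgeι_eq_zero_of_finrank_lt _ W (by omega) ![0, 1, 3] (by decide)
      fun i => by fin_cases i <;> simp [ha, hb, hw]

theorem mem_wedgeSpan_of_wedgeMul_eq_zero (hcompl : IsCompl V₁ V₂)
    (hV₁ : Module.finrank E V₁ = 2) (hV₂ : Module.finrank E V₂ = 2) {x : ⋀[E]^2 V}
    (h₁ : ∀ v ∈ V₁, ∀ w ∈ V₁, wedgeMul E x (wedgeι E 2 ![v, w]) = 0)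
    (h₂ : ∀ v ∈ V₂, ∀ w ∈ V₂, wedgeMul E x (wedgeι E 2 ![v, w]) = 0) :
    x ∈ wedgeSpan E V₁ V₂ := by
  let b₁ := Module.finBasisOfFinrankEq E V₁ hV₁
  let b₂ := Module.finBasisOfFinrankEq E V₂ hV₂
  set ω₁ := wedgeι E 2 ![(b₁ 0 : V), b₁ 1]
  set ω₂ := wedgeι E 2 ![(b₂ 0 : V), b₂ 1]
  have hω₁ : ω₁ ∈ wedgeSpan E V₁ V₁ := subset_span ⟨_, (b₁ 0).2, _, (b₁ 1).2, rfl⟩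
  have hω₂ : ω₂ ∈ wedgeSpan E V₂ V₂ := subset_span ⟨_, (b₂ 0).2, _, (b₂ 1).2, rfl⟩
  have hx : x ∈ wedgeSpan E V₁ V₂ ⊔ (wedgeSpan E V₁ V₁ ⊔ wedgeSpan E V₂ V₂) :=
    wedgeSpan_sup_eq_top hcompl.sup_eq_top ▸ mem_top
  obtain ⟨p, hp, q, hq, rfl⟩ := mem_sup.1 hx
  obtain ⟨q₁, hq₁, q₂, hq₂, rfl⟩ := mem_sup.1 hq
  obtain ⟨α, rfl⟩ := mem_span_singleton.1 (wedgeSpan_self_le_span_singleton b₁ hq₁)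
  obtain ⟨β, rfl⟩ := mem_span_singleton.1 (wedgeSpan_self_le_span_singleton b₂ hq₂)
  have hω₁ω₂ : wedgeMul E ω₁ ω₂ ≠ 0 := by
    rw [wedgeMul_wedgeι_two]
    exact wedgeι_four_ne_zero hcompl.disjoint (b₁ 0).2 (b₁ 1).2 (b₂ 0).2 (b₂ 1).2
      b₁.linearIndependent.coe_pair b₂.linearIndependent.coe_pair
  have hω₂ω₁ : wedgeMul E ω₂ ω₁ ≠ 0 := by
    rw [wedgeMul_wedgeι_two]
    exact wedgeι_four_ne_zero hcompl.disjoint.symm (b₂ 0).2 (b₂ 1).2 (b₁ 0).2 (b₁ 1).2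
      b₂.linearIndependent.coe_pair b₁.linearIndependent.coe_pair
  have hpω₁ : wedgeMul E p ω₁ = 0 :=
    wedgeMul_eq_zero_of_mem_wedgeSpan_of_mem hV₁ (wedgeSpan_comm V₁ V₂ ▸ hp) (b₁ 0).2 (b₁ 1).2
  have hpω₂ : wedgeMul E p ω₂ = 0 :=
    wedgeMul_eq_zero_of_mem_wedgeSpan_of_mem hV₂ hp (b₂ 0).2 (b₂ 1).2
  have hω₁ω₁ : wedgeMul E ω₁ ω₁ = 0 := wedgeMul_eq_zero_of_mem_wedgeSpan_self hV₁ hω₁ (.inl (b₁ 0).2)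
  have hω₂ω₂ : wedgeMul E ω₂ ω₂ = 0 := wedgeMul_eq_zero_of_mem_wedgeSpan_self hV₂ hω₂ (.inl (b₂ 0).2)
  -- pairing with `ω₂` and with `ω₁` isolates `α` and `β`
  have hα : wedgeMul E (p + (α • ω₁ + β • ω₂)) ω₂ = 0 := h₂ _ (b₂ 0).2 _ (b₂ 1).2
  have hβ : wedgeMul E (p + (α • ω₁ + β • ω₂)) ω₁ = 0 := h₁ _ (b₁ 0).2 _ (b₁ 1).2
  simp only [wedgeMul_add_left, wedgeMul_smul_left, hpω₁, hpω₂, hω₁ω₁, hω₂ω₂, smul_zero,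
    zero_add, add_zero, smul_eq_zero, hω₁ω₂, hω₂ω₁, or_false] at hα hβ
  simpa [hα, hβ] using hp

theorem mem_sup_wedgeSpan_of_wedgeMul_eq_zero (hcompl : IsCompl V₁ V₂)
    (hV₁ : Module.finrank E V₁ = 2) (hV₂ : Module.finrank E V₂ = 2) {x : ⋀[E]^2 V}
    (h : ∀ v ∈ V₁, ∀ w ∈ V₂, wedgeMul E x (wedgeι E 2 ![v, w]) = 0) :
    x ∈ wedgeSpan E V₁ V₁ ⊔ wedgeSpan E V₂ V₂ := by
  let b₁ := Module.finBasisOfFinrankEq E V₁ hV₁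
  have hx : x ∈ wedgeSpan E V₁ V₂ ⊔ (wedgeSpan E V₁ V₁ ⊔ wedgeSpan E V₂ V₂) :=
    wedgeSpan_sup_eq_top hcompl.sup_eq_top ▸ mem_top
  obtain ⟨p, hp, q, hq, rfl⟩ := mem_sup.1 hx
  obtain ⟨q₁, hq₁, q₂, hq₂, rfl⟩ := mem_sup.1 hq
  suffices p = 0 by rw [this, zero_add]; exact hq
  obtain ⟨w₀, hw₀, w₁, hw₁, rfl⟩ := exists_eq_wedgePair_add_wedgePair b₁ hp
  have hp0 : ∀ a ∈ V₁, ∀ u ∈ V₂, wedgeι E 4 ![(b₁ 0 : V), w₀, a, u]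
      + wedgeι E 4 ![(b₁ 1 : V), w₁, a, u] = 0 := fun a ha u hu => by
    have := h a ha u hu
    rwa [wedgeMul_add_left, wedgeMul_add_left, wedgeMul_add_left,
      wedgeMul_eq_zero_of_mem_wedgeSpan_self hV₁ hq₁ (.inl ha),
      wedgeMul_eq_zero_of_mem_wedgeSpan_self hV₂ hq₂ (.inr hu), add_zero, add_zero,
      wedgePair_apply, wedgePair_apply, wedgeMul_wedgeι_two, wedgeMul_wedgeι_two] at this
  -- pairing with `b₁ 1 ∧ u` kills the `b₁ 1`-term, and pairing with `b₁ 0 ∧ u` the `b₁ 0`-term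
  have hrep : ∀ a w u : V, wedgeι E 4 ![a, w, a, u] = 0 := fun a w u =>
    (exteriorPower.ιMulti E 4).map_eq_zero_of_eq ![a, w, a, u] (i := 0) (j := 2) rfl (by decide)
  have hw₀0 : w₀ = 0 := eq_zero_of_forall_wedgeι_eq_zero hcompl.disjoint hV₂ (b₁ 0).2 (b₁ 1).2
      b₁.linearIndependent.coe_pair hw₀ fun u hu => by
    simpa [hrep] using hp0 _ (b₁ 1).2 u hu
  have hw₁0 : w₁ = 0 := eq_zero_of_forall_wedgeι_eq_zero hcompl.disjoint hV₂ (b₁ 1).2 (b₁ 0).2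
      (LinearIndependent.pair_symm_iff.1 b₁.linearIndependent.coe_pair) hw₁ fun u hu => by
    simpa [hrep] using hp0 _ (b₁ 0).2 u hu
  simp [hw₀0, hw₁0]

end Decomposition

theorem IsDetForm.apply_wedgeι_two {E V : Type*} [Field E] [AddCommGroup V] [Module E V]
    {ρ : E →+* E} {H : V → V → E} {h : ⋀[E]^2 V → ⋀[E]^2 V → E} (hh : IsDetForm ρ H 2 h)
    (v w v' w' : V) :
    h (wedgeι E 2 ![v, w]) (wedgeι E 2 ![v', w']) = H v v' * H w w' - H v w' * H w v' := by
  rw [hh.2.2.2.2, Matrix.det_fin_two]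
  rfl

theorem L_and_exterior_square_on_decomposition_general
    {F E : Type*} [Field F] [Field E] [Algebra F E]
    (ρ : E →+* E)
    {V : Type*} [AddCommGroup V] [Module E V] [FiniteDimensional E V]
    (H : V → V → E)
    (H_conj : ∀ x y, H x y = ρ (H y x))
    (d : (⋀[E]^4 V) ≃ₗ[E] E)
    (h₂ : (⋀[E]^2 V) → (⋀[E]^2 V) → E) (hh₂ : IsDetForm ρ H 2 h₂)
    (L : (⋀[E]^2 V) → (⋀[E]^2 V))
    (L_add : ∀ x y, L (x + y) = L x + L y)
    (L_smul : ∀ (a : E) (x : ⋀[E]^2 V), L (a • x) = ρ a • L x)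
    (L_def : ∀ x y : ⋀[E]^2 V, d (wedgeMul E (L x) y) = h₂ x y)
    (V₁ V₂ : Submodule E V) (hcompl : IsCompl V₁ V₂)
    (hV₁ : Module.finrank E V₁ = 2) (hV₂ : Module.finrank E V₂ = 2)
    (horth : ∀ x ∈ V₁, ∀ y ∈ V₂, H x y = 0) :
    (∀ z ∈ wedgeSpan E V₁ V₂, L z ∈ wedgeSpan E V₁ V₂) ∧
    (∀ z ∈ wedgeSpan E V₁ V₁ ⊔ wedgeSpan E V₂ V₂,
      L z ∈ wedgeSpan E V₁ V₁ ⊔ wedgeSpan E V₂ V₂) ∧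
    (∀ (g : V ≃ₗ[E] V) (ν : F), ν ≠ 0 →
      (∀ x y, H (g x) (g y) = algebraMap F E ν * H x y) →
      ∀ (hg₁ : ∀ x ∈ V₁, (g : V →ₗ[E] V) x ∈ V₁) (hg₂ : ∀ x ∈ V₂, (g : V →ₗ[E] V) x ∈ V₂)
        (Λg : (⋀[E]^2 V) →ₗ[E] (⋀[E]^2 V)),
        (∀ v : Fin 2 → V, Λg (wedgeι E 2 v) = wedgeι E 2 (⇑g ∘ v)) →
        (∀ z ∈ wedgeSpan E V₁ V₁,
          Λg z = LinearMap.det ((g : V →ₗ[E] V).restrict hg₁) • z) ∧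
        (∀ z ∈ wedgeSpan E V₂ V₂,
          Λg z = LinearMap.det ((g : V →ₗ[E] V).restrict hg₂) • z) ∧
        (∀ x ∈ V₁, ∀ y ∈ V₂,
          Λg (wedgeι E 2 ![x, y]) = wedgeι E 2 ![g x, g y] ∧
          Λg (wedgeι E 2 ![x, y]) ∈ wedgeSpan E V₁ V₂)) := by
  have hL : ∀ x y, wedgeMul E (L x) y = 0 ↔ h₂ x y = 0 := fun x y => by
    rw [← L_def, LinearEquiv.map_eq_zero_iff]
  have horth' : ∀ y ∈ V₂, ∀ x ∈ V₁, H y x = 0 := fun y hy x hx => by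
    rw [H_conj, horth x hx y hy, map_zero]
  let Lₛₗ : ⋀[E]^2 V →ₛₗ[ρ] ⋀[E]^2 V := { toFun := L, map_add' := L_add, map_smul' := L_smul }
  refine ⟨fun z hz => ?_, fun z hz => ?_, fun g _ _ _ hg₁ hg₂ Λg hΛ => ?_⟩
  · refine (span_le (p := (wedgeSpan E V₁ V₂).comap Lₛₗ)).2 ?_ hz
    rintro _ ⟨v, hv, w, hw, rfl⟩
    refine mem_wedgeSpan_of_wedgeMul_eq_zero hcompl hV₁ hV₂ (fun x hx y hy => ?_)
      (fun x hx y hy => ?_) <;> change wedgeMul E (L _) _ = 0 <;> rw [hL, hh₂.apply_wedgeι_two]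
    · simp [horth' w hw x hx, horth' w hw y hy]
    · simp [horth v hv x hx, horth v hv y hy]
  · refine (sup_le (span_le.2 ?_) (span_le.2 ?_) :
      _ ≤ (wedgeSpan E V₁ V₁ ⊔ wedgeSpan E V₂ V₂).comap Lₛₗ) hz <;>
      rintro _ ⟨v, hv, w, hw, rfl⟩ <;>
      refine mem_sup_wedgeSpan_of_wedgeMul_eq_zero hcompl hV₁ hV₂ fun x hx y hy => ?_ <;>
      change wedgeMul E (L _) _ = 0 <;> rw [hL, hh₂.apply_wedgeι_two]
    · simp [horth v hv y hy, horth w hw y hy]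
    · simp [horth' v hv x hx, horth' w hw x hx]
  · obtain rfl : Λg = exteriorPower.map 2 (g : V →ₗ[E] V) :=
      exteriorPower.linearMap_ext <| AlternatingMap.ext fun v =>
        (hΛ v).trans (exteriorPower.map_apply_ιMulti _ _).symm
    refine ⟨fun z hz => exteriorPower.map_eq_det_smul_of_mem_wedgeSpan hV₁ _ hg₁ hz,
      fun z hz => exteriorPower.map_eq_det_smul_of_mem_wedgeSpan hV₂ _ hg₂ hz,
      fun x hx y hy => ⟨exteriorPower.map_wedgeι_two _ x y, ?_⟩⟩
    rw [exteriorPower.map_wedgeι_two]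
    exact subset_span ⟨g x, hg₁ x hx, g y, hg₂ y hy, rfl⟩

/-- Let `V = V₁ ⊕ V₂` be an orthogonal direct sum of two 2-dimensional
subspaces. Then (i) `L` preserves both `V₁∧V₂` and `⋀²V₁ ⊕ ⋀²V₂`; (ii) if `g = g₁ ⊕ g₂` with
`gᵢ ∈ GU(Vᵢ)` and `ν(g₁) = ν(g₂)`, then `⋀²g` acts on `⋀²Vᵢ` by the scalar `det gᵢ` and maps
`V₁∧V₂` to itself by `v∧w ↦ g₁v ∧ g₂w`. -/
theorem L_and_exterior_square_on_decomposition
    {F E : Type*} [Field F] [CharZero F] [Field E] [Algebra F E]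
    (hquad : Module.finrank F E = 2)
    (ρ : E →+* E) (hρ_invol : ∀ a, ρ (ρ a) = a) (hρ_ne : ρ ≠ RingHom.id E)
    (hρ_fixF : ∀ c : F, ρ (algebraMap F E c) = algebraMap F E c)
    (hρ_fixed_field : ∀ a : E, ρ a = a → ∃ c : F, algebraMap F E c = a)
    {V : Type*} [AddCommGroup V] [Module E V] [FiniteDimensional E V]
    (hV4 : Module.finrank E V = 4)
    (H : V → V → E)
    (H_add_left : ∀ x y z, H (x + y) z = H x z + H y z)
    (H_add_right : ∀ x y z, H x (y + z) = H x y + H x z)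
    (H_smul : ∀ (a b : E) (x y : V), H (a • x) (b • y) = ρ a * H x y * b)
    (H_conj : ∀ x y, H x y = ρ (H y x))
    (H_nondeg : ∀ x, (∀ y, H x y = 0) → x = 0)
    (d : (⋀[E]^4 V) ≃ₗ[E] E)
    (h₂ : (⋀[E]^2 V) → (⋀[E]^2 V) → E) (hh₂ : IsDetForm ρ H 2 h₂)
    (L : (⋀[E]^2 V) → (⋀[E]^2 V))
    (L_add : ∀ x y, L (x + y) = L x + L y)
    (L_smul : ∀ (a : E) (x : ⋀[E]^2 V), L (a • x) = ρ a • L x)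
    (L_def : ∀ x y : ⋀[E]^2 V, d (wedgeMul E (L x) y) = h₂ x y)
    (V₁ V₂ : Submodule E V) (hcompl : IsCompl V₁ V₂)
    (hV₁ : Module.finrank E V₁ = 2) (hV₂ : Module.finrank E V₂ = 2)
    (horth : ∀ x ∈ V₁, ∀ y ∈ V₂, H x y = 0) :
    (∀ z ∈ wedgeSpan E V₁ V₂, L z ∈ wedgeSpan E V₁ V₂) ∧
    (∀ z ∈ wedgeSpan E V₁ V₁ ⊔ wedgeSpan E V₂ V₂,
      L z ∈ wedgeSpan E V₁ V₁ ⊔ wedgeSpan E V₂ V₂) ∧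
    (∀ (g : V ≃ₗ[E] V) (ν : F), ν ≠ 0 →
      (∀ x y, H (g x) (g y) = algebraMap F E ν * H x y) →
      ∀ (hg₁ : ∀ x ∈ V₁, (g : V →ₗ[E] V) x ∈ V₁) (hg₂ : ∀ x ∈ V₂, (g : V →ₗ[E] V) x ∈ V₂)
        (Λg : (⋀[E]^2 V) →ₗ[E] (⋀[E]^2 V)),
        (∀ v : Fin 2 → V, Λg (wedgeι E 2 v) = wedgeι E 2 (⇑g ∘ v)) →
        (∀ z ∈ wedgeSpan E V₁ V₁,
          Λg z = LinearMap.det ((g : V →ₗ[E] V).restrict hg₁) • z) ∧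
        (∀ z ∈ wedgeSpan E V₂ V₂,
          Λg z = LinearMap.det ((g : V →ₗ[E] V).restrict hg₂) • z) ∧
        (∀ x ∈ V₁, ∀ y ∈ V₂,
          Λg (wedgeι E 2 ![x, y]) = wedgeι E 2 ![g x, g y] ∧
          Λg (wedgeι E 2 ![x, y]) ∈ wedgeSpan E V₁ V₂)) :=
  L_and_exterior_square_on_decomposition_general ρ H H_conj d h₂ hh₂ L L_add L_smul L_def V₁ V₂
    hcompl hV₁ hV₂ horth
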